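/- arXiv:1309.1031 — 2 statements merged into one kernel-verified Lean document; each statement's English description precedes it below -/
import Mathlib

section
/- The set 𝕀 = [0,1]² \ {(0,r) : r > 0} with the lexicographic order is a complete lattice: every subset of 𝕀 has a least upper bound and a greatest lower bound in 𝕀. -/
/-- The truth-value set `𝕀 = [0,1]² \ {(0,r) : r > 0}` inside `[0,1]×[0,1]`
with the lexicographic order. -/
def II : Set (Lex (ℝ × ℝ)) :=
  {p | 0 ≤ (ofLex p).1 ∧ (ofLex p).1 ≤ 1 ∧ 0 ≤ (ofLex p).2 ∧ (ofLex p).2 ≤ 1 ∧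
       ((ofLex p).1 ≠ 0 ∨ (ofLex p).2 = 0)}

/-!
The lexicographic square `[0,1] ×ₗ [0,1]` has all suprema: the supremum of a set is `(a, b)`,
where `a` is the supremum of the first coordinates and `b` that of the second coordinates of the
points lying over `a` (`b = 0` when there are none). For a subset of `𝕀` this point lies in `𝕀`
again, because if `a = 0` every point of the set is `(0, 0)`. Hence `𝕀` has all suprema, and an
infimum is the supremum of the lower bounds. Infima taken in the square need not lie in `𝕀`:
that of `{(1/n, 0)}` is `(0, 1)`.
-/

open Set

theorem Prod.Lex.isLUB_toLex {α β : Type*} [PartialOrder α] [Preorder β] {s : Set (α ×ₗ β)}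
    {a : α} {b : β} (ha : IsLUB ((fun p ↦ (ofLex p).1) '' s) a)
    (hb : IsLUB {y | toLex (a, y) ∈ s} b) : IsLUB s (toLex (a, b)) := by
  refine ⟨fun p hp ↦ le_iff'.2 ⟨ha.1 ⟨p, hp, rfl⟩, fun h ↦ hb.1 ?_⟩, fun v hv ↦ ?_⟩
  · simp only [ofLex_toLex] at h
    rw [mem_ofPred, ← h]
    exact hp
  have hav : a ≤ (ofLex v).1 := ha.2 (monotone_fst_ofLex.mem_upperBounds_image hv)
  exact le_iff'.2 ⟨hav, fun h ↦ hb.2 fun y hy ↦ (le_iff'.1 (hv hy)).2 h⟩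

namespace II

def toIccLex (p : II) : Icc (0 : ℝ) 1 ×ₗ Icc (0 : ℝ) 1 :=
  toLex (⟨(ofLex p.1).1, p.2.1, p.2.2.1⟩, ⟨(ofLex p.1).2, p.2.2.2.1, p.2.2.2.2.1⟩)

theorem toIccLex_le_toIccLex {p q : II} : toIccLex p ≤ toIccLex q ↔ p ≤ q := by
  rw [← Subtype.coe_le_coe, Prod.Lex.le_iff, Prod.Lex.le_iff, ← Subtype.coe_lt_coe,
    Subtype.ext_iff]
  rfl

theorem exists_toIccLex_eq {q : Icc (0 : ℝ) 1 ×ₗ Icc (0 : ℝ) 1}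
    (hq : ((ofLex q).1 : ℝ) = 0 → ((ofLex q).2 : ℝ) = 0) : ∃ p, toIccLex p = q :=
  ⟨⟨toLex ((ofLex q).1, (ofLex q).2), (ofLex q).1.2.1, (ofLex q).1.2.2, (ofLex q).2.2.1,
    (ofLex q).2.2.2, or_iff_not_imp_left.2 fun h ↦ hq (not_not.1 h)⟩, rfl⟩

theorem exists_isLUB (S : Set II) : ∃ p, IsLUB S p := by
  set s := toIccLex '' S
  set a := sSup ((fun q ↦ (ofLex q).1) '' s)
  set b := sSup {y | toLex (a, y) ∈ s}
  obtain ⟨p, hp⟩ : ∃ p, toIccLex p = toLex (a, b) := by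
    refine exists_toIccLex_eq fun ha ↦ ?_
    suffices b = ⊥ from congrArg Subtype.val this
    refine le_bot_iff.1 (sSup_le ?_)
    rintro y ⟨r, -, hry⟩
    have hx : (ofLex r.1).1 = a := congrArg (fun q ↦ ((ofLex q).1 : ℝ)) hry
    have hy : (ofLex r.1).2 = y := congrArg (fun q ↦ ((ofLex q).2 : ℝ)) hry
    have hr : (ofLex r.1).2 = 0 := r.2.2.2.2.2.resolve_left (not_not.2 (hx.trans ha))
    exact (Subtype.ext (hy.symm.trans hr)).le
  exact ⟨p, .of_image toIccLex_le_toIccLex <|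
    hp ▸ Prod.Lex.isLUB_toLex (isLUB_sSup _) (isLUB_sSup _)⟩

end II

/-- `𝕀` is a complete lattice: every subset of `𝕀` has a least upper bound and a
greatest lower bound in `𝕀`. -/
theorem II_complete (S : Set ↥II) :
    (∃ a : ↥II, IsLUB S a) ∧ (∃ b : ↥II, IsGLB S b) :=
  ⟨II.exists_isLUB S, (II.exists_isLUB (lowerBounds S)).imp fun _ ↦ isLUB_lowerBounds.1⟩
end

section
/- If a theory T in rational Gödel logic is strongly consistent (T does not prove r̄ for any rational r > 0), and φ, ψ are sentences, then at least one of T ∪ {φ → ψ} and T ∪ {ψ → φ} is strongly consistent. -/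
/-!
If both `T ∪ {φ → ψ}` and `T ∪ {ψ → φ}` proved positive constants `r̄` and `s̄`, then by the
deduction theorem and book-keeping `T` would prove `(φ → ψ) → t̄` and `(ψ → φ) → t̄` for
`t = min r s`, and prelinearity would give `T ⊢ t̄` with `0 < t ≤ 1`.
-/

section GoedelProvability

variable {Sent : Type} {imp : Sent → Sent → Sent} {const : ℚ → Sent}
  {Prov : Set Sent → Sent → Prop}

theorem prov_imp_const_of_le
    (book : ∀ (T : Set Sent) (r s : ℚ), s ≤ r → Prov T (imp (const r) (const s)))
    (trans : ∀ (T : Set Sent) a b c,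
      Prov T (imp a b) → Prov T (imp b c) → Prov T (imp a c))
    {T : Set Sent} {χ : Sent} {r s : ℚ} (h : Prov T (imp χ (const r))) (hsr : s ≤ r) :
    Prov T (imp χ (const s)) :=
  trans T _ _ _ h (book T r s hsr)

theorem prov_const_min_of_prelin
    (book : ∀ (T : Set Sent) (r s : ℚ), s ≤ r → Prov T (imp (const r) (const s)))
    (trans : ∀ (T : Set Sent) a b c,
      Prov T (imp a b) → Prov T (imp b c) → Prov T (imp a c))
    (prelin : ∀ (T : Set Sent) φ ψ χ,
      Prov T (imp (imp φ ψ) χ) → Prov T (imp (imp ψ φ) χ) → Prov T χ)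
    {T : Set Sent} {φ ψ : Sent} {r s : ℚ}
    (hr : Prov T (imp (imp φ ψ) (const r))) (hs : Prov T (imp (imp ψ φ) (const s))) :
    Prov T (const (min r s)) :=
  prelin T φ ψ _ (prov_imp_const_of_le book trans hr (min_le_left r s))
    (prov_imp_const_of_le book trans hs (min_le_right r s))

end GoedelProvability

/-- If `T` is strongly consistent (it proves no truth constant `r̄` with `r > 0`),
then for any sentences `φ, ψ`, at least one of `T ∪ {φ → ψ}` and `T ∪ {ψ → φ}`
is strongly consistent.  The Hilbert-style proof system of rational Gödel logic is
abstracted by a provability predicate `Prov` satisfying the deduction theorem,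
the book-keeping axioms `⊢ r̄ → s̄` for `r ≥ s`, transitivity of implication, and
the prelinearity rule. -/
theorem strongly_consistent_or
    (Sent : Type) (imp : Sent → Sent → Sent) (const : ℚ → Sent)
    (Prov : Set Sent → Sent → Prop)
    (ded : ∀ T φ ψ, Prov (T ∪ {φ}) ψ ↔ Prov T (imp φ ψ))
    (book : ∀ (T : Set Sent) (r s : ℚ), s ≤ r → Prov T (imp (const r) (const s)))
    (trans : ∀ (T : Set Sent) a b c,
      Prov T (imp a b) → Prov T (imp b c) → Prov T (imp a c))
    (prelin : ∀ (T : Set Sent) φ ψ χ,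
      Prov T (imp (imp φ ψ) χ) → Prov T (imp (imp ψ φ) χ) → Prov T χ)
    (T : Set Sent)
    (hT : ∀ r : ℚ, 0 < r → r ≤ 1 → ¬ Prov T (const r))
    (φ ψ : Sent) :
    (∀ r : ℚ, 0 < r → r ≤ 1 → ¬ Prov (T ∪ {imp φ ψ}) (const r)) ∨
    (∀ r : ℚ, 0 < r → r ≤ 1 → ¬ Prov (T ∪ {imp ψ φ}) (const r)) := by
  by_contra! h
  obtain ⟨⟨r, hr0, hr1, hr⟩, ⟨s, hs0, -, hs⟩⟩ := h
  exact hT (min r s) (lt_min hr0 hs0) ((min_le_left r s).trans hr1)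
    (prov_const_min_of_prelin book trans prelin ((ded T _ _).mp hr) ((ded T _ _).mp hs))
end
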